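/- arXiv:2412.10938 — 3 statements merged into one kernel-verified Lean document; each statement's English description precedes it below -/
import Mathlib

section
/- Let q>1 be a real number. Then there exist K>0 and α∈ℝ such that |E_q(z)| ≤ K · exp( (log|z|)² / (2 log q) ) · |z|^α for every z∈ℂ∖{0}. -/
/-!
With `L = log |z|` and `Q = log q`, the `n`-th term of `E_q(z)` has modulus
`exp (n L - n (n - 1) Q / 2)`. Completing the square in `n`,
`n L - n (n - 1) Q / 2 = L² / (2Q) + L + Q / 2 - n Q / 2 - (L - (n - 1) Q)² / (2Q)`,
so the terms are dominated by `exp (L² / (2Q)) · |z| · q^{1/2} · q^{-n/2}`, a geometric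
series of ratio `q^{-1/2} < 1`; this gives the bound with `α = 1`.
-/

set_option autoImplicit false

open Complex Real

/-- The q-analog of the exponential `E_q(z) = ∑_{n ≥ 0} q^{-n(n-1)/2} z^n`. -/
noncomputable def Eq' (q : ℝ) (z : ℂ) : ℂ :=
  ∑' n : ℕ, z ^ n / (q : ℂ) ^ (n * (n - 1) / 2)

lemma mul_sub_mul_sub_one_div_two_mul_le (L Q x : ℝ) (hQ : 0 < Q) :
    x * L - x * (x - 1) / 2 * Q ≤ L ^ 2 / (2 * Q) + L + Q / 2 + x * (-(Q / 2)) := by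
  have completed_square : L ^ 2 / (2 * Q) + L + Q / 2 + x * (-(Q / 2))
      - (x * L - x * (x - 1) / 2 * Q) = (L - (x - 1) * Q) ^ 2 / (2 * Q) := by
    field_simp
    ring
  linarith [show 0 ≤ (L - (x - 1) * Q) ^ 2 / (2 * Q) by positivity]

lemma pow_div_pow_choose_two_le {q r : ℝ} (hq : 1 < q) (hr : 0 < r) (n : ℕ) :
    r ^ n / q ^ n.choose 2 ≤ rexp (Real.log r ^ 2 / (2 * Real.log q)) * r *
      rexp (Real.log q / 2) * rexp (-(Real.log q / 2)) ^ n := by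
  have hlhs : r ^ n / q ^ n.choose 2 =
      rexp (n * Real.log r - (n.choose 2 : ℝ) * Real.log q) := by
    rw [Real.exp_sub, Real.exp_nat_mul, Real.exp_nat_mul, Real.exp_log hr,
      Real.exp_log (by linarith)]
  rw [hlhs, ← Real.exp_log hr, ← Real.exp_add, ← Real.exp_add, ← Real.exp_nat_mul,
    ← Real.exp_add, Real.exp_log hr, Real.exp_le_exp, Nat.cast_choose_two]
  exact mul_sub_mul_sub_one_div_two_mul_le _ _ _ (Real.log_pos hq)

lemma norm_Eq'_term {q : ℝ} (hq : 0 < q) (z : ℂ) (n : ℕ) :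
    ‖z ^ n / (q : ℂ) ^ (n * (n - 1) / 2)‖ = ‖z‖ ^ n / q ^ n.choose 2 := by
  rw [norm_div, norm_pow, norm_pow, norm_real, Real.norm_of_nonneg hq.le,
    Nat.choose_two_right]

lemma exp_neg_half_log_lt_one {q : ℝ} (hq : 1 < q) : rexp (-(Real.log q / 2)) < 1 :=
  Real.exp_lt_one_iff.mpr (by linarith [Real.log_pos hq])

lemma norm_Eq'_le {q : ℝ} (hq : 1 < q) {z : ℂ} (hz : z ≠ 0) :
    ‖Eq' q z‖ ≤ rexp (Real.log q / 2) * (1 - rexp (-(Real.log q / 2)))⁻¹ *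
      rexp (Real.log ‖z‖ ^ 2 / (2 * Real.log q)) * ‖z‖ := by
  refine (tsum_of_norm_bounded
    ((hasSum_geometric_of_lt_one (Real.exp_pos _).le (exp_neg_half_log_lt_one hq)).mul_left _)
    fun n ↦ (norm_Eq'_term (by linarith) z n).trans_le
      (pow_div_pow_choose_two_le hq (norm_pos_iff.mpr hz) n)).trans_eq ?_
  ring

theorem Eq_upper_bound (q : ℝ) (hq : 1 < q) :
    ∃ K : ℝ, 0 < K ∧ ∃ α : ℝ, ∀ z : ℂ, z ≠ 0 →
      ‖Eq' q z‖ ≤ K * Real.exp ((Real.log ‖z‖) ^ 2 / (2 * Real.log q)) * ‖z‖ ^ α := by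
  refine ⟨rexp (Real.log q / 2) * (1 - rexp (-(Real.log q / 2)))⁻¹,
    mul_pos (Real.exp_pos _) (inv_pos.mpr (sub_pos.mpr (exp_neg_half_log_lt_one hq))),
    1, fun z hz ↦ ?_⟩
  rw [rpow_one]
  exact norm_Eq'_le hq hz
end

section
/- Let q>1 be a real number. Then there exists C₁>0 such that |exp_q(z)| ≤ C₁ · exp( (log|z|)² / (2 log q) ) · |z|^{ log(q−1)/log q − 1/2 } for every z∈ℂ with |z|≥1. -/
set_option autoImplicit false

open Complex Real

/-- The q-factorial `[n]_q! = ∏_{j=1}^n (q^j - 1)/(q - 1)`. -/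
noncomputable def qFactorial (q : ℝ) (n : ℕ) : ℝ :=
  ∏ j ∈ Finset.range n, ((q ^ (j + 1) - 1) / (q - 1))

/-- The q-exponential `exp_q(z) = ∑_{n ≥ 0} z^n / [n]_q!`. -/
noncomputable def qExp (q : ℝ) (z : ℂ) : ℂ :=
  ∑' n : ℕ, z ^ n / (qFactorial q n : ℂ)

/-!
Writing `r = ‖z‖`, the `n`-th term of `exp_q(z)` has modulus `∏_{j<n} r (q-1) / (q^{j+1}-1)`.
Since `q^{j+1}/(q^{j+1}-1) = 1 + 1/(q^{j+1}-1) ≤ exp(1/(q^{j+1}-1))` and these exponents sum to at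
most `q/(q-1)²`, the modulus is at most `e^{q/(q-1)²} exp(nB - log q · n(n+1)/2)` with
`B = log(r(q-1))`. Completing the square in `n` rewrites this as
`e^{q/(q-1)²} exp((B - log q / 2)² / (2 log q)) exp(-(log q / 2)(n - x)²)` with
`x = B / log q - 1/2`, and the Gaussian sum `∑ₙ exp(-c(n - x)²)` is bounded uniformly in `x`.
Expanding `(B - log q / 2)²` produces the factors `exp((log r)² / (2 log q))` and
`r ^ (log(q-1)/log q - 1/2)`.
-/

open Finset

lemma geom_sum_le_inv_one_sub {K : Type*} [Field K] [LinearOrder K] [IsStrictOrderedRing K]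
    {x : K} (hx₀ : 0 ≤ x) (hx₁ : x < 1) (n : ℕ) : ∑ i ∈ range n, x ^ i ≤ (1 - x)⁻¹ := by
  have h := geom_sum_Ico_le_of_lt_one (m := 0) (n := n) hx₀ hx₁
  rwa [← range_eq_Ico, pow_zero, one_div] at h

section GaussianSum

variable {c : ℝ}

lemma exp_neg_mul_sq_le_pow (hc : 0 ≤ c) {t : ℝ} {k : ℕ} (hk : (k : ℝ) ≤ |t|) :
    Real.exp (-c * t ^ 2) ≤ Real.exp (-c) ^ k := by
  rw [← Real.exp_nat_mul, Real.exp_le_exp]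
  have hk_sq : (k : ℝ) ≤ (k : ℝ) ^ 2 := by exact_mod_cast Nat.le_self_pow two_ne_zero k
  have ht_sq : (k : ℝ) ^ 2 ≤ t ^ 2 := by
    rw [← sq_abs t]
    exact pow_le_pow_left₀ (Nat.cast_nonneg k) hk 2
  nlinarith

lemma exp_neg_mul_sq_nat_add_ceil_sub_le (hc : 0 ≤ c) (x : ℝ) (n : ℕ) :
    Real.exp (-c * ((↑(n + ⌈x⌉₊) : ℝ) - x) ^ 2) ≤ Real.exp (-c) ^ n :=
  exp_neg_mul_sq_le_pow hc <| by
    have := Nat.le_ceil x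
    rw [abs_of_nonneg] <;> push_cast <;> linarith

lemma exp_neg_mul_sq_sub_le_of_lt_ceil (hc : 0 ≤ c) {x : ℝ} {n : ℕ} (hn : n < ⌈x⌉₊) :
    Real.exp (-c * ((n : ℝ) - x) ^ 2) ≤ Real.exp (-c) ^ (⌈x⌉₊ - 1 - n) :=
  exp_neg_mul_sq_le_pow hc <| by
    have hx : ((⌈x⌉₊ - 1 : ℕ) : ℝ) < x := Nat.lt_ceil.mp (by omega)
    rw [abs_sub_comm, abs_of_pos (by linarith [Nat.lt_ceil.mp hn]), Nat.cast_sub (by omega)]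
    linarith

lemma summable_exp_neg_mul_sq_sub (hc : 0 < c) (x : ℝ) :
    Summable fun n : ℕ => Real.exp (-c * ((n : ℝ) - x) ^ 2) :=
  (summable_nat_add_iff ⌈x⌉₊).mp <|
    (summable_geometric_of_lt_one (Real.exp_pos _).le (Real.exp_lt_one_iff.mpr (by linarith))
      ).of_nonneg_of_le (fun _ => (Real.exp_pos _).le) (exp_neg_mul_sq_nat_add_ceil_sub_le hc.le x)

/-- The integers on either side of `x` are at distance at least `0, 1, 2, …` from it, so each side
contributes at most a geometric series. -/
lemma tsum_exp_neg_mul_sq_sub_le (hc : 0 < c) (x : ℝ) :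
    ∑' n : ℕ, Real.exp (-c * ((n : ℝ) - x) ^ 2) ≤ 2 * (1 - Real.exp (-c))⁻¹ := by
  set r := Real.exp (-c)
  set m := ⌈x⌉₊
  have hr0 : 0 ≤ r := (Real.exp_pos _).le
  have hr1 : r < 1 := Real.exp_lt_one_iff.mpr (by linarith)
  have hhead : ∑ n ∈ range m, Real.exp (-c * ((n : ℝ) - x) ^ 2) ≤ (1 - r)⁻¹ :=
    calc ∑ n ∈ range m, Real.exp (-c * ((n : ℝ) - x) ^ 2)
        ≤ ∑ n ∈ range m, r ^ (m - 1 - n) :=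
          sum_le_sum fun n hn => exp_neg_mul_sq_sub_le_of_lt_ceil hc.le (mem_range.mp hn)
      _ = ∑ n ∈ range m, r ^ n := sum_range_reflect (r ^ ·) m
      _ ≤ (1 - r)⁻¹ := geom_sum_le_inv_one_sub hr0 hr1 m
  have htail : ∑' n : ℕ, Real.exp (-c * ((↑(n + m) : ℝ) - x) ^ 2) ≤ (1 - r)⁻¹ := by
    rw [← tsum_geometric_of_lt_one hr0 hr1]
    exact Summable.tsum_le_tsum (exp_neg_mul_sq_nat_add_ceil_sub_le hc.le x)
      ((summable_nat_add_iff m).mpr (summable_exp_neg_mul_sq_sub hc x))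
      (summable_geometric_of_lt_one hr0 hr1)
  rw [← (summable_exp_neg_mul_sq_sub hc x).sum_add_tsum_nat_add m]
  linarith

end GaussianSum

section QExp

variable {q : ℝ}

lemma qNumber_pos (hq : 1 < q) (j : ℕ) : 0 < (q ^ (j + 1) - 1) / (q - 1) :=
  div_pos (sub_pos.mpr (one_lt_pow₀ hq j.succ_ne_zero)) (sub_pos.mpr hq)

lemma div_qNumber_le_exp (hq : 1 < q) {r : ℝ} (hr : 0 < r) (j : ℕ) :
    r / ((q ^ (j + 1) - 1) / (q - 1)) ≤
      Real.exp (Real.log r + Real.log (q - 1) - (j + 1) * Real.log q + 1 / (q ^ (j + 1) - 1)) := by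
  set a := q ^ (j + 1)
  have ha : 1 < a := one_lt_pow₀ hq j.succ_ne_zero
  have hlog : Real.log a = (j + 1) * Real.log q := by simp [a, Real.log_pow]
  have ha1 : a - 1 ≠ 0 := by linarith
  have hq1 : q - 1 ≠ 0 := by linarith
  calc r / ((a - 1) / (q - 1))
      = Real.exp (Real.log r + Real.log (q - 1) - Real.log a) * (1 / (a - 1) + 1) := by
        rw [Real.exp_sub, Real.exp_add, Real.exp_log hr, Real.exp_log (by linarith),
          Real.exp_log (by linarith)]
        field_simp
        ring
    _ ≤ _ := by
        rw [hlog, Real.exp_add]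
        gcongr
        exact Real.add_one_le_exp _

lemma sum_range_one_div_pow_sub_one_le (hq : 1 < q) (n : ℕ) :
    ∑ j ∈ range n, 1 / (q ^ (j + 1) - 1) ≤ q / (q - 1) ^ 2 := by
  have hq1 : 0 < q - 1 := sub_pos.mpr hq
  calc ∑ j ∈ range n, 1 / (q ^ (j + 1) - 1) ≤ ∑ j ∈ range n, (q - 1)⁻¹ * q⁻¹ ^ j := by
        gcongr with j
        rw [inv_pow, ← mul_inv, one_div]
        apply inv_anti₀ (by positivity)
        have : 1 ≤ q ^ j := one_le_pow₀ hq.le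
        rw [pow_succ]
        nlinarith
    _ ≤ (q - 1)⁻¹ * (1 - q⁻¹)⁻¹ := by
        rw [← mul_sum]
        gcongr
        exact geom_sum_le_inv_one_sub (by positivity) (inv_lt_one_of_one_lt₀ hq) n
    _ = q / (q - 1) ^ 2 := by
        field_simp

lemma norm_pow_div_qFactorial_le (hq : 1 < q) {z : ℂ} (hz : z ≠ 0) (n : ℕ) :
    ‖z ^ n / (qFactorial q n : ℂ)‖ ≤ Real.exp (q / (q - 1) ^ 2 +
      n * (Real.log ‖z‖ + Real.log (q - 1)) - Real.log q * (n * (n + 1) / 2)) := by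
  have hgauss : ∀ m : ℕ, ∑ j ∈ range m, ((j : ℝ) + 1) = m * (m + 1) / 2 := by
    intro m
    induction m with
    | zero => simp
    | succ m ih => rw [sum_range_succ, ih]; push_cast; ring
  have hnorm : ‖z ^ n / (qFactorial q n : ℂ)‖ =
      ∏ j ∈ range n, ‖z‖ / ((q ^ (j + 1) - 1) / (q - 1)) := by
    rw [norm_div, norm_pow, Complex.norm_real, qFactorial,
      Real.norm_of_nonneg (prod_nonneg fun j _ => (qNumber_pos hq j).le)]
    conv_rhs => rw [prod_div_distrib, prod_const, card_range]
  calc ‖z ^ n / (qFactorial q n : ℂ)‖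
      ≤ ∏ j ∈ range n, Real.exp (Real.log ‖z‖ + Real.log (q - 1) - (j + 1) * Real.log q +
          1 / (q ^ (j + 1) - 1)) :=
        hnorm ▸ prod_le_prod (fun j _ => (div_pos (norm_pos_iff.mpr hz) (qNumber_pos hq j)).le)
          fun j _ => div_qNumber_le_exp hq (norm_pos_iff.mpr hz) j
    _ = Real.exp (∑ j ∈ range n, 1 / (q ^ (j + 1) - 1) +
          n * (Real.log ‖z‖ + Real.log (q - 1)) - Real.log q * ∑ j ∈ range n, ((j : ℝ) + 1)) := by
        rw [← Real.exp_sum]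
        congr 1
        simp only [sum_add_distrib, sum_sub_distrib, ← sum_mul, sum_const, card_range,
          nsmul_eq_mul]
        ring
    _ ≤ _ := by
        rw [hgauss]
        gcongr
        exact sum_range_one_div_pow_sub_one_le hq n

lemma norm_qExp_le (hq : 1 < q) {z : ℂ} (hz : z ≠ 0) :
    ‖qExp q z‖ ≤ Real.exp (q / (q - 1) ^ 2) * (2 * (1 - Real.exp (-(Real.log q / 2)))⁻¹) *
      Real.exp ((Real.log ‖z‖ + Real.log (q - 1) - Real.log q / 2) ^ 2 / (2 * Real.log q)) := by
  set L := Real.log q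
  set B := Real.log ‖z‖ + Real.log (q - 1)
  set x := B / L - 1 / 2
  have hL : 0 < L := Real.log_pos hq
  have hterm : ∀ n : ℕ, ‖z ^ n / (qFactorial q n : ℂ)‖ ≤ Real.exp (q / (q - 1) ^ 2) *
      Real.exp ((B - L / 2) ^ 2 / (2 * L)) * Real.exp (-(L / 2) * ((n : ℝ) - x) ^ 2) := by
    intro n
    refine (norm_pow_div_qFactorial_le hq hz n).trans_eq ?_
    rw [← Real.exp_add, ← Real.exp_add]
    congr 1
    have hL0 : Real.log q ≠ 0 := hL.ne'
    simp only [x, B, L]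
    field_simp
    ring
  calc ‖qExp q z‖
      ≤ ∑' n : ℕ, Real.exp (q / (q - 1) ^ 2) * Real.exp ((B - L / 2) ^ 2 / (2 * L)) *
          Real.exp (-(L / 2) * ((n : ℝ) - x) ^ 2) :=
        tsum_of_norm_bounded ((summable_exp_neg_mul_sq_sub (by positivity) x).mul_left _).hasSum
          hterm
    _ = Real.exp (q / (q - 1) ^ 2) * Real.exp ((B - L / 2) ^ 2 / (2 * L)) *
          ∑' n : ℕ, Real.exp (-(L / 2) * ((n : ℝ) - x) ^ 2) := tsum_mul_left
    _ ≤ Real.exp (q / (q - 1) ^ 2) * Real.exp ((B - L / 2) ^ 2 / (2 * L)) *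
          (2 * (1 - Real.exp (-(L / 2)))⁻¹) := by
        gcongr
        exact tsum_exp_neg_mul_sq_sub_le (by positivity) x
    _ = _ := by ring

end QExp

theorem qExp_upper_bound (q : ℝ) (hq : 1 < q) :
    ∃ C₁ : ℝ, 0 < C₁ ∧ ∀ z : ℂ, 1 ≤ ‖z‖ →
      ‖qExp q z‖ ≤ C₁ * Real.exp ((Real.log ‖z‖) ^ 2 / (2 * Real.log q)) *
        ‖z‖ ^ (Real.log (q - 1) / Real.log q - 1 / 2) := by
  set L := Real.log q
  set D := Real.log (q - 1)
  have hL : 0 < L := Real.log_pos hq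
  have hgauss : 0 < 1 - Real.exp (-(L / 2)) := sub_pos.mpr (Real.exp_lt_one_iff.mpr (by linarith))
  refine ⟨Real.exp (q / (q - 1) ^ 2) * (2 * (1 - Real.exp (-(L / 2)))⁻¹) *
    Real.exp ((D - L / 2) ^ 2 / (2 * L)), by positivity, fun z hz => ?_⟩
  have hz0 : 0 < ‖z‖ := one_pos.trans_le hz
  have hsquare : Real.exp ((Real.log ‖z‖ + D - L / 2) ^ 2 / (2 * L)) =
      Real.exp ((D - L / 2) ^ 2 / (2 * L)) * Real.exp (Real.log ‖z‖ ^ 2 / (2 * L)) *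
        Real.exp (Real.log ‖z‖ * (D / L - 1 / 2)) := by
    rw [← Real.exp_add, ← Real.exp_add]
    congr 1
    field_simp
    ring
  refine (norm_qExp_le hq (norm_pos_iff.mp hz0)).trans_eq ?_
  rw [hsquare, Real.rpow_def_of_pos hz0]
  ring
end

section
/- Let q>1 be a real number. Then the limit lim_{n→∞} ( [n]_q! / q^{n(n−1)/2} ) · ((q−1)/q)^n exists, equals the convergent infinite product ∏_{j=1}^∞ (1 − q^{−j}), and is a strictly positive real number. -/
set_option autoImplicit false

open Real Filter

/-!
Since `1 + 2 + ⋯ + n = n(n-1)/2 + n`, the normalized q-factorial is the partial product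
`∏_{j=1}^n [j]_q (q - 1) / q^j = ∏_{j=1}^n (1 - q^{-j})`. For `q > 1` the factors are positive
and `∑ log (1 - q^{-j})` converges because `∑ q^{-j}` does, so the partial products converge
to `exp (∑ log (1 - q^{-j})) > 0`.
-/

theorem Real.hasProd_one_sub_of_summable {ι : Type*} {f : ι → ℝ} (hf1 : ∀ i, f i < 1)
    (hf : Summable f) : HasProd (fun i ↦ 1 - f i) (rexp (∑' i, log (1 - f i))) := by
  simp_rw [sub_eq_add_neg]
  exact hasProd_of_hasSum_log (fun i ↦ by linarith [hf1 i])
    (summable_log_one_add_of_summable hf.neg).hasSum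

theorem qFactorial_div_mul_eq_prod (q : ℝ) (hq0 : q ≠ 0) (hq1 : q ≠ 1) (n : ℕ) :
    qFactorial q n / q ^ (n * (n - 1) / 2) * ((q - 1) / q) ^ n =
      ∏ j ∈ Finset.range n, (1 - q⁻¹ ^ (j + 1)) := by
  rw [← Finset.sum_range_id, ← Finset.prod_pow_eq_pow_sum, ← Finset.card_range n,
    ← Finset.prod_const, Finset.card_range, qFactorial, ← Finset.prod_div_distrib,
    ← Finset.prod_mul_distrib]
  refine Finset.prod_congr rfl fun j _ ↦ ?_
  rw [inv_pow]
  field_simp [sub_ne_zero.mpr hq1]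
  ring

theorem qFactorial_asymptotic (q : ℝ) (hq : 1 < q) :
    Multipliable (fun j : ℕ => 1 - q⁻¹ ^ (j + 1)) ∧
    0 < (∏' j : ℕ, (1 - q⁻¹ ^ (j + 1))) ∧
    Tendsto (fun n : ℕ =>
        qFactorial q n / q ^ (n * (n - 1) / 2) * ((q - 1) / q) ^ n)
      atTop (nhds (∏' j : ℕ, (1 - q⁻¹ ^ (j + 1)))) := by
  have hr0 : 0 ≤ q⁻¹ := inv_nonneg.mpr (by linarith)
  have hr1 : q⁻¹ < 1 := inv_lt_one_of_one_lt₀ hq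
  have hprod := Real.hasProd_one_sub_of_summable
    (fun j ↦ pow_lt_one₀ hr0 hr1 j.succ_ne_zero)
    ((summable_geometric_of_lt_one hr0 hr1).comp_injective (add_left_injective 1))
  refine ⟨hprod.multipliable, hprod.tprod_eq ▸ exp_pos _, ?_⟩
  rw [hprod.tprod_eq]
  refine hprod.tendsto_prod_nat.congr fun n ↦ ?_
  exact (qFactorial_div_mul_eq_prod q (by linarith) hq.ne' n).symm
end
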